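/- Let n ≥ 1 and 1 ≤ l ≤ n−1, and let f be the Morse quadratic of index l on ℝⁿ. Then for every real number c < 0, the level set f⁻¹(c) is homeomorphic to the product B^{n−l} × S^{l−1} of the open unit ball in ℝ^{n−l} with the unit sphere in ℝ^{l}. -/

import Mathlib

/-! Splitting `ℝⁿ = ℝˡ × ℝⁿ⁻ˡ` as `x = (u, v)`, the Morse quadratic is `‖v‖² - ‖u‖²`, so for
`c < 0` the level set is the graph `‖u‖ = √(‖v‖² - c)` of a positive function of `v`.
Such a graph is homeomorphic to `ℝⁿ⁻ˡ × Sˡ⁻¹` via `(u, v) ↦ (v, u / ‖u‖)`, and `ℝⁿ⁻ˡ` is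
homeomorphic to its open unit ball. -/

/-- The Morse quadratic of index `l` on `ℝⁿ`:
`f(x) = -x₁² - ⋯ - x_l² + x_{l+1}² + ⋯ + x_n²`. -/
noncomputable def morseQuadratic (n l : ℕ) : EuclideanSpace ℝ (Fin n) → ℝ :=
  fun x => ∑ i : Fin n, (if (i : ℕ) < l then -(x i) ^ 2 else (x i) ^ 2)

open Metric

noncomputable def normGraphHomeomorphProdSphere {E F : Type*} [NormedAddCommGroup E]
    [NormedSpace ℝ E] [TopologicalSpace F] (g : F → ℝ) (hg : Continuous g)
    (hg_pos : ∀ v, 0 < g v) :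
    {p : E × F | ‖p.1‖ = g p.2} ≃ₜ F × sphere (0 : E) 1 where
  toFun p := (p.1.2, ⟨‖p.1.1‖⁻¹ • p.1.1, by
    have : p.1.1 ≠ 0 := norm_pos_iff.mp (p.2 ▸ hg_pos _)
    simpa using norm_smul_inv_norm (𝕜 := ℝ) this⟩)
  invFun q := ⟨(g q.1 • (q.2 : E), q.1), by simp [norm_smul, (hg_pos _).le]⟩
  left_inv := by
    rintro ⟨⟨u, v⟩, hp : ‖u‖ = g v⟩
    ext <;> simp [← hp, smul_smul, (hp ▸ hg_pos v).ne']
  right_inv := by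
    rintro ⟨v, w, hw⟩
    rw [mem_sphere_zero_iff_norm] at hw
    ext <;> simp [norm_smul, smul_smul, hw, (hg_pos v).ne', abs_of_pos (hg_pos v)]
  continuous_toFun := by
    have hu : Continuous fun p : {p : E × F | ‖p.1‖ = g p.2} => p.1.1 :=
      continuous_fst.comp continuous_subtype_val
    refine (continuous_snd.comp continuous_subtype_val).prodMk (Continuous.subtype_mk ?_ _)
    exact (hu.norm.inv₀ fun p => (p.2 ▸ hg_pos _ : 0 < ‖p.1.1‖).ne').smul hu
  continuous_invFun := by fun_prop

theorem morseQuadratic_add_eq_norm_sq_sub (l m : ℕ) (x : EuclideanSpace ℝ (Fin (l + m))) :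
    morseQuadratic (l + m) l x =
      ‖(EuclideanSpace.finAddEquivProd x).2‖ ^ 2 - ‖(EuclideanSpace.finAddEquivProd x).1‖ ^ 2 := by
  simp only [morseQuadratic, Fin.sum_univ_add, Fin.val_castAdd, Fin.is_lt, ↓reduceIte,
    Finset.sum_neg_distrib, Fin.val_natAdd, add_lt_iff_neg_left, not_lt_zero,
    ContinuousLinearEquiv.trans_apply, LinearIsometryEquiv.coe_toContinuousLinearEquiv,
    WithLp.prodContinuousLinearEquiv_apply, PiLp.sumPiLpEquivProdLpPiLp_apply_ofLp,
    LinearIsometryEquiv.piLpCongrLeft_apply, Equiv.piCongrLeft'_apply, Equiv.symm_symm,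
    finSumFinEquiv_apply_left, finSumFinEquiv_apply_right, EuclideanSpace.real_norm_sq_eq]
  ring

theorem morseQuadratic_preimage_eq_normGraph {l m : ℕ} {c : ℝ} (hc : c < 0) :
    morseQuadratic (l + m) l ⁻¹' {c} =
      EuclideanSpace.finAddEquivProd ⁻¹' {p | ‖p.1‖ = √(‖p.2‖ ^ 2 - c)} := by
  ext x
  set p := EuclideanSpace.finAddEquivProd x
  have hpos : 0 ≤ ‖p.2‖ ^ 2 - c := by nlinarith [sq_nonneg ‖p.2‖]
  simp only [Set.mem_preimage, Set.mem_singleton_iff, Set.mem_ofPred_eq,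
    morseQuadratic_add_eq_norm_sq_sub]
  rw [eq_comm (a := ‖p.1‖), Real.sqrt_eq_iff_eq_sq hpos (norm_nonneg _)]
  constructor <;> intro h <;> linarith

theorem morse_level_neg_homeomorph_ball_prod_sphere_general
    (n l : ℕ) (hl2 : l ≤ n - 1) (c : ℝ) (hc : c < 0) :
    Nonempty ((morseQuadratic n l ⁻¹' {c}) ≃ₜ
      (Metric.ball (0 : EuclideanSpace ℝ (Fin (n - l))) 1) ×
        (Metric.sphere (0 : EuclideanSpace ℝ (Fin l)) 1)) := by
  obtain ⟨m, rfl⟩ := Nat.exists_eq_add_of_le (show l ≤ n by omega)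
  rw [Nat.add_sub_cancel_left]
  have hg_pos (v : EuclideanSpace ℝ (Fin m)) : 0 < √(‖v‖ ^ 2 - c) :=
    Real.sqrt_pos.mpr (by nlinarith [sq_nonneg ‖v‖])
  exact ⟨(EuclideanSpace.finAddEquivProd.toHomeomorph.sets
      (morseQuadratic_preimage_eq_normGraph hc)).trans
    ((normGraphHomeomorphProdSphere _ (by fun_prop) hg_pos).trans
      (Homeomorph.unitBall.prodCongr (Homeomorph.refl _)))⟩

/-- for `c < 0`, the level set `f⁻¹(c)` of the Morse quadratic of index
`l` (`1 ≤ l ≤ n-1`) is homeomorphic to `B^{n-l} × S^{l-1}`. -/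
theorem morse_level_neg_homeomorph_ball_prod_sphere
    (n l : ℕ) (hn : 1 ≤ n) (hl1 : 1 ≤ l) (hl2 : l ≤ n - 1) (c : ℝ) (hc : c < 0) :
    Nonempty ((morseQuadratic n l ⁻¹' {c}) ≃ₜ
      (Metric.ball (0 : EuclideanSpace ℝ (Fin (n - l))) 1) ×
        (Metric.sphere (0 : EuclideanSpace ℝ (Fin l)) 1)) :=
  morse_level_neg_homeomorph_ball_prod_sphere_general n l hl2 c hc
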